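/- Monotonicity of the interaction Morawetz functional for the linear Schrödinger flow: Let u, v : ℝ_t × ℝ_x → ℂ be smooth solutions of i∂_t u + ∂_x² u = 0 and i∂_t v + ∂_x² v = 0 such that for each t the functions u(t,·), v(t,·) are Schwartz, with all Schwartz seminorms locally bounded in t. Define I(t) = ∬_{x > y} [ M(u(t))(x)·P(v(t))(y) − P(u(t))(x)·M(v(t))(y) ] dx dy. Then I is differentiable in t and dI/dt (t) = ∫_ℝ [ M(u(t))E(v(t)) + M(v(t))E(u(t)) − 2P(u(t))P(v(t)) ] dx = 4 ∫_ℝ |∂_x (u(t,x)·conj(v(t,x)))|² dx ≥ 0; in particular I is nondecreasing. -/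

import Mathlib

/-!
Mass and momentum obey the local conservation laws `∂ₜ M = ∂ₓ P` and `∂ₜ P = ∂ₓ E`. For any
two conservation laws `∂ₜ a = ∂ₓ b`, `∂ₜ g = ∂ₓ k`, the pairing `∬_{x>y} a(x) g(y)` has time
derivative `∫ (a k - b g)`: the tail `∫_{x>y} a` changes at the rate `-b(y)`, and an integration
by parts in `y` moves `∂ₓ k` onto the tail. Writing `⟨a, g⟩` for this pairing, we have
`I = ⟨M u, P v⟩ - ⟨P u, M v⟩`, so `I' = ∫ (M u E v + M v E u - 2 P u P v)`; a pointwise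
computation shows that this integrand differs from `4 |∂ₓ(u v̄)|²` by the exact derivative
`∂ₓ (M u ∂ₓ M v + M v ∂ₓ M u)`.

The Schwartz bounds make every density decay like `(1 + x²)⁻¹` uniformly for `t` in bounded
intervals, which justifies the differentiation under the integral sign and the integrations by
parts.
-/

noncomputable section
open ComplexConjugate MeasureTheory

/-- Partial derivative in time of a function of `(t,x)`. -/
def pdt (u : ℝ → ℝ → ℂ) (t x : ℝ) : ℂ := deriv (fun s => u s x) t

/-- Partial derivative in space of a function of `(t,x)`. -/
def pdx (u : ℝ → ℝ → ℂ) (t x : ℝ) : ℂ := deriv (fun y => u t y) x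

/-- The mass density `M(u) = |u|²` (as `u·conj u`). -/
def Mdens (u : ℝ → ℝ → ℂ) (t x : ℝ) : ℂ := u t x * conj (u t x)

/-- The momentum density `P(u) = i(conj u·∂ₓu − u·∂ₓ(conj u))`. -/
def Pdens (u : ℝ → ℝ → ℂ) (t x : ℝ) : ℂ :=
  Complex.I * (conj (u t x) * pdx u t x - u t x * conj (pdx u t x))

/-- The energy density `E(u) = −conj u·∂ₓ²u + 2|∂ₓu|² − u·∂ₓ²(conj u)`. -/
def Edens (u : ℝ → ℝ → ℂ) (t x : ℝ) : ℂ :=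
  - conj (u t x) * pdx (pdx u) t x + 2 * pdx u t x * conj (pdx u t x)
    - u t x * conj (pdx (pdx u) t x)

/-- The interaction Morawetz functional
`I(t) = ∬_{x > y} (M(u(t))(x)·P(v(t))(y) − P(u(t))(x)·M(v(t))(y)) dx dy`. -/
def interactionI (u v : ℝ → ℝ → ℂ) (t : ℝ) : ℂ :=
  ∫ y : ℝ, ∫ x in Set.Ioi y,
    (Mdens u t x * Pdens v t y - Pdens u t x * Mdens v t y)

/-- The quartic Morawetz production term
`D(t) = ∫ (M(u)E(v) + M(v)E(u) − 2P(u)P(v)) dx`. -/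
def morawetzD (u v : ℝ → ℝ → ℂ) (t : ℝ) : ℂ :=
  ∫ x : ℝ, (Mdens u t x * Edens v t x + Mdens v t x * Edens u t x
    - 2 * Pdens u t x * Pdens v t x)

open Filter Topology Set Function

lemma hasDerivAt_integral_Ioi {E : Type*} [NormedAddCommGroup E] [NormedSpace ℝ E]
    [CompleteSpace E] {f : ℝ → E} (hf : Integrable f) (hc : Continuous f) (y : ℝ) :
    HasDerivAt (fun y => ∫ x in Ioi y, f x) (-f y) y := by
  have h : (fun y => ∫ x in Ioi y, f x) = fun y => (∫ x in y..0, f x) + ∫ x in Ioi 0, f x :=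
    funext fun y => eq_add_of_sub_eq
      (intervalIntegral.integral_Ioi_sub_Ioi' hf.integrableOn hf.integrableOn)
  rw [h]
  exact (intervalIntegral.integral_hasDerivAt_left hf.intervalIntegrable
    hc.aestronglyMeasurable.stronglyMeasurableAtFilter hc.continuousAt).add_const _

lemma integral_eq_of_hasDerivAt_sub {E : Type*} [NormedAddCommGroup E] [NormedSpace ℝ E]
    {f g h : ℝ → E} (hh : ∀ x, HasDerivAt h (f x - g x) x) (hf : Integrable f)
    (hg : Integrable g) (hhi : Integrable h) : ∫ x, f x = ∫ x, g x := by
  have h0 := integral_eq_zero_of_hasDerivAt_of_integrable hh (hf.sub hg) hhi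
  rwa [integral_sub hf hg, sub_eq_zero] at h0

lemma re_integral_mul_conj_nonneg {α : Type*} [MeasurableSpace α] (μ : Measure α)
    (f : α → ℂ) : 0 ≤ (∫ x, f x * conj (f x) ∂μ).re := by
  simp_rw [Complex.mul_conj]
  rw [integral_complex_ofReal, Complex.ofReal_re]
  exact integral_nonneg fun x => Complex.normSq_nonneg _

lemma monotone_re_of_hasDerivAt {f f' : ℝ → ℂ} (hf : ∀ t, HasDerivAt f (f' t) t)
    (hf' : ∀ t, 0 ≤ (f' t).re) : Monotone fun t => (f t).re := by
  have hre (t : ℝ) : HasDerivAt (fun s => (f s).re) (f' t).re t :=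
    Complex.reCLM.hasFDerivAt.comp_hasDerivAt t (hf t)
  exact monotone_of_deriv_nonneg (fun t => (hre t).differentiableAt)
    fun t => (hre t).deriv ▸ hf' t

lemma HasDerivAt.conj {f : ℝ → ℂ} {f' : ℂ} {x : ℝ} (h : HasDerivAt f f' x) :
    HasDerivAt (fun y => conj (f y)) (conj f') x :=
  h.star

namespace Schrodinger

section Partials

variable {u : ℝ → ℝ → ℂ}

lemma hasDerivAt_pdx (hu : Differentiable ℝ (uncurry u)) (t x : ℝ) :
    HasDerivAt (u t) (pdx u t x) x :=
  ((hu.comp ((differentiable_const t).prodMk differentiable_id)) x).hasDerivAt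

lemma hasDerivAt_pdt (hu : Differentiable ℝ (uncurry u)) (t x : ℝ) :
    HasDerivAt (fun s => u s x) (pdt u t x) t :=
  ((hu.comp (differentiable_id.prodMk (differentiable_const x))) t).hasDerivAt

lemma uncurry_pdx (hu : Differentiable ℝ (uncurry u)) :
    uncurry (pdx u) = fun p => fderiv ℝ (uncurry u) p (0, 1) :=
  funext fun p => by
    exact ((hu p).hasFDerivAt.comp_hasDerivAt p.2
      ((hasDerivAt_const p.2 p.1).prodMk (hasDerivAt_id p.2))).deriv

lemma uncurry_pdt (hu : Differentiable ℝ (uncurry u)) :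
    uncurry (pdt u) = fun p => fderiv ℝ (uncurry u) p (1, 0) :=
  funext fun p => by
    exact ((hu p).hasFDerivAt.comp_hasDerivAt p.1
      ((hasDerivAt_id p.1).prodMk (hasDerivAt_const p.1 p.2))).deriv

lemma contDiff_pdx (hu : ContDiff ℝ (⊤ : ℕ∞) (uncurry u)) :
    ContDiff ℝ (⊤ : ℕ∞) (uncurry (pdx u)) := by
  rw [uncurry_pdx (hu.differentiable (by simp))]
  exact (hu.fderiv_right (by simp)).clm_apply contDiff_const

lemma pdt_pdx (hu : ContDiff ℝ 2 (uncurry u)) (t x : ℝ) :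
    pdt (pdx u) t x = pdx (pdt u) t x := by
  have hd : Differentiable ℝ (uncurry u) := hu.differentiable (by simp)
  have hd2 : Differentiable ℝ (fderiv ℝ (uncurry u)) :=
    (hu.fderiv_right (m := 1) le_rfl).differentiable one_ne_zero
  have dir (w : ℝ × ℝ) : Differentiable ℝ fun p => fderiv ℝ (uncurry u) p w :=
    hd2.clm_apply (differentiable_const w)
  have second (v w : ℝ × ℝ) : fderiv ℝ (fun p => fderiv ℝ (uncurry u) p v) (t, x) w
      = fderiv ℝ (fderiv ℝ (uncurry u)) (t, x) w v := by
    simp [fderiv_clm_apply (hd2 (t, x)) (differentiableAt_const v)]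
  have h1 := congrFun (uncurry_pdt (u := pdx u) (by rw [uncurry_pdx hd]; exact dir _)) (t, x)
  have h2 := congrFun (uncurry_pdx (u := pdt u) (by rw [uncurry_pdt hd]; exact dir _)) (t, x)
  simp only [uncurry_apply_pair, uncurry_pdx hd, uncurry_pdt hd] at h1 h2
  rw [h1, h2, second, second]
  exact (hu.contDiffAt.isSymmSndFDerivAt (by simp)) _ _

end Partials

structure SchwartzFamily (u : ℝ → ℝ → ℂ) : Prop where
  contDiff : ContDiff ℝ (⊤ : ℕ∞) (uncurry u)
  bound : ∀ (k n : ℕ) (T : ℝ), ∃ C : ℝ, ∀ t x : ℝ, |t| ≤ T →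
    |x| ^ k * ‖iteratedDeriv n (u t) x‖ ≤ C

structure Decaying (w : ℝ → ℝ → ℂ) : Prop where
  continuous : ∀ t, Continuous (w t)
  bound : ∀ T : ℝ, ∃ C : ℝ, 0 ≤ C ∧ ∀ t x : ℝ, |t| ≤ T → ‖w t x‖ ≤ C * (1 + x ^ 2)⁻¹

namespace Decaying

variable {w w' z : ℝ → ℝ → ℂ}

lemma add (hw : Decaying w) (hz : Decaying z) : Decaying fun t x => w t x + z t x where
  continuous t := (hw.continuous t).add (hz.continuous t)
  bound T := by
    obtain ⟨C, hC0, hC⟩ := hw.bound T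
    obtain ⟨D, hD0, hD⟩ := hz.bound T
    refine ⟨C + D, by positivity, fun t x ht => (norm_add_le _ _).trans ?_⟩
    rw [add_mul]
    exact add_le_add (hC t x ht) (hD t x ht)

lemma sub (hw : Decaying w) (hz : Decaying z) : Decaying fun t x => w t x - z t x where
  continuous t := (hw.continuous t).sub (hz.continuous t)
  bound T := by
    obtain ⟨C, hC0, hC⟩ := hw.bound T
    obtain ⟨D, hD0, hD⟩ := hz.bound T
    refine ⟨C + D, by positivity, fun t x ht => (norm_sub_le _ _).trans ?_⟩
    rw [add_mul]
    exact add_le_add (hC t x ht) (hD t x ht)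

lemma neg (hw : Decaying w) : Decaying fun t x => -w t x where
  continuous t := (hw.continuous t).neg
  bound T := by simpa only [norm_neg] using hw.bound T

lemma star (hw : Decaying w) : Decaying fun t x => conj (w t x) where
  continuous t := Complex.continuous_conj.comp (hw.continuous t)
  bound T := by simpa only [Complex.norm_conj] using hw.bound T

lemma const_mul (hw : Decaying w) (c : ℂ) : Decaying fun t x => c * w t x where
  continuous t := continuous_const.mul (hw.continuous t)
  bound T := by
    obtain ⟨C, hC0, hC⟩ := hw.bound T
    refine ⟨‖c‖ * C, by positivity, fun t x ht => ?_⟩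
    rw [norm_mul, mul_assoc]
    exact mul_le_mul_of_nonneg_left (hC t x ht) (norm_nonneg c)

lemma mul_of_bounded (hz : Decaying z) (hwc : ∀ t, Continuous (w t))
    (hwb : ∀ T : ℝ, ∃ C : ℝ, 0 ≤ C ∧ ∀ t x : ℝ, |t| ≤ T → ‖w t x‖ ≤ C) :
    Decaying fun t x => w t x * z t x where
  continuous t := (hwc t).mul (hz.continuous t)
  bound T := by
    obtain ⟨C, hC0, hC⟩ := hwb T
    obtain ⟨D, hD0, hD⟩ := hz.bound T
    refine ⟨C * D, by positivity, fun t x ht => ?_⟩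
    rw [norm_mul, mul_assoc]
    exact mul_le_mul (hC t x ht) (hD t x ht) (norm_nonneg _) hC0

lemma bounded (hw : Decaying w) (T : ℝ) :
    ∃ C : ℝ, 0 ≤ C ∧ ∀ t x : ℝ, |t| ≤ T → ‖w t x‖ ≤ C := by
  obtain ⟨C, hC0, hC⟩ := hw.bound T
  exact ⟨C, hC0, fun t x ht => (hC t x ht).trans
    (mul_le_of_le_one_right hC0 (inv_le_one_of_one_le₀ (by nlinarith [sq_nonneg x])))⟩

lemma mul (hw : Decaying w) (hz : Decaying z) : Decaying fun t x => w t x * z t x :=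
  hz.mul_of_bounded hw.continuous hw.bounded

lemma integrable (hw : Decaying w) (t : ℝ) : Integrable (w t) := by
  obtain ⟨C, -, hC⟩ := hw.bound |t|
  exact (integrable_inv_one_add_sq.const_mul C).mono' (hw.continuous t).aestronglyMeasurable
    (ae_of_all _ fun x => hC t x le_rfl)

lemma tendsto_atTop (hw : Decaying w) (t : ℝ) : Tendsto (w t) atTop (𝓝 0) := by
  obtain ⟨C, -, hC⟩ := hw.bound |t|
  have h : Tendsto (fun x : ℝ => 1 + x ^ 2) atTop atTop :=
    tendsto_atTop_add_const_left _ 1 (tendsto_pow_atTop two_ne_zero)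
  refine squeeze_zero_norm (fun x => hC t x le_rfl) ?_
  simpa using h.inv_tendsto_atTop.const_mul C

lemma hasDerivAt_setIntegral (hw : Decaying w) (hw' : Decaying w')
    (hderiv : ∀ t x, HasDerivAt (fun s => w s x) (w' t x) t) (s : Set ℝ) (t₀ : ℝ) :
    HasDerivAt (fun t => ∫ x in s, w t x) (∫ x in s, w' t₀ x) t₀ := by
  obtain ⟨C, -, hC⟩ := hw'.bound (|t₀| + 1)
  have near (t : ℝ) (ht : t ∈ Metric.ball t₀ 1) : |t| ≤ |t₀| + 1 := by
    rw [Metric.mem_ball, Real.dist_eq] at ht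
    linarith [abs_sub_abs_le_abs_sub t t₀]
  exact (hasDerivAt_integral_of_dominated_loc_of_deriv_le (Metric.ball_mem_nhds t₀ one_pos)
    (Eventually.of_forall fun t => (hw.continuous t).aestronglyMeasurable)
    (hw.integrable t₀).integrableOn (hw'.continuous t₀).aestronglyMeasurable
    (ae_of_all _ fun x t ht => hC t x (near t ht))
    (integrable_inv_one_add_sq.const_mul C).integrableOn
    (ae_of_all _ fun x t _ => hderiv t x)).2

lemma integral_Ioi_bounded (hw : Decaying w) (T : ℝ) :
    ∃ C : ℝ, 0 ≤ C ∧ ∀ t y : ℝ, |t| ≤ T → ‖∫ x in Ioi y, w t x‖ ≤ C := by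
  obtain ⟨C, hC0, hC⟩ := hw.bound T
  have hint := integrable_inv_one_add_sq.const_mul C
  refine ⟨C * Real.pi, by positivity, fun t y ht => ?_⟩
  calc ‖∫ x in Ioi y, w t x‖ ≤ ∫ x in Ioi y, C * (1 + x ^ 2)⁻¹ :=
        norm_integral_le_of_norm_le hint.integrableOn (ae_of_all _ fun x => hC t x ht)
    _ ≤ ∫ x, C * (1 + x ^ 2)⁻¹ :=
        setIntegral_le_integral hint (ae_of_all _ fun x => by positivity)
    _ = C * Real.pi := by rw [integral_const_mul, integral_univ_inv_one_add_sq]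

lemma integral_Ioi_mul (hw : Decaying w) (hz : Decaying z) :
    Decaying fun t y => (∫ x in Ioi y, w t x) * z t y :=
  hz.mul_of_bounded (fun t => continuous_iff_continuousAt.2 fun y =>
    (hasDerivAt_integral_Ioi (hw.integrable t) (hw.continuous t) y).continuousAt)
    hw.integral_Ioi_bounded

end Decaying

namespace SchwartzFamily

variable {u : ℝ → ℝ → ℂ}

lemma pdx (hu : SchwartzFamily u) : SchwartzFamily (pdx u) where
  contDiff := contDiff_pdx hu.contDiff
  bound k n T := by
    obtain ⟨C, hC⟩ := hu.bound k (n + 1) T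
    refine ⟨C, fun t x ht => ?_⟩
    rw [show _root_.pdx u t = deriv (u t) from rfl, ← iteratedDeriv_succ']
    exact hC t x ht

lemma decaying (hu : SchwartzFamily u) : Decaying u where
  continuous t := hu.contDiff.continuous.comp (continuous_const.prodMk continuous_id)
  bound T := by
    obtain ⟨C₀, hC₀⟩ := hu.bound 0 0 T
    obtain ⟨C₂, hC₂⟩ := hu.bound 2 0 T
    refine ⟨|C₀| + |C₂|, by positivity, fun t x ht => ?_⟩
    have h₀ := hC₀ t x ht
    have h₂ := hC₂ t x ht
    simp only [pow_zero, one_mul, iteratedDeriv_zero, sq_abs] at h₀ h₂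
    rw [← div_eq_mul_inv, le_div_iff₀ (by positivity)]
    nlinarith [le_abs_self C₀, le_abs_self C₂]

lemma hasDerivAt_pdx (hu : SchwartzFamily u) (t x : ℝ) :
    HasDerivAt (u t) (_root_.pdx u t x) x :=
  _root_.Schrodinger.hasDerivAt_pdx (hu.contDiff.differentiable (by simp)) t x

lemma hasDerivAt_pdt (hu : SchwartzFamily u) (t x : ℝ) :
    HasDerivAt (fun s => u s x) (pdt u t x) t :=
  _root_.Schrodinger.hasDerivAt_pdt (hu.contDiff.differentiable (by simp)) t x

end SchwartzFamily

structure ConservationLaw (a b : ℝ → ℝ → ℂ) : Prop where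
  decaying_density : Decaying a
  decaying_flux : Decaying b
  decaying_pdx_flux : Decaying (pdx b)
  differentiable_flux : ∀ t, Differentiable ℝ (b t)
  hasDerivAt_density : ∀ t x, HasDerivAt (fun s => a s x) (pdx b t x) t

namespace ConservationLaw

variable {a b g k : ℝ → ℝ → ℂ}

lemma hasDerivAt_flux (h : ConservationLaw a b) (t x : ℝ) : HasDerivAt (b t) (pdx b t x) x :=
  (h.differentiable_flux t x).hasDerivAt

lemma hasDerivAt_integral_Ioi (h : ConservationLaw a b) (t y : ℝ) :
    HasDerivAt (fun s => ∫ x in Ioi y, a s x) (-b t y) t := by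
  have hd := h.decaying_density.hasDerivAt_setIntegral h.decaying_pdx_flux
    h.hasDerivAt_density (Ioi y) t
  rwa [integral_Ioi_of_hasDerivAt_of_tendsto' (fun x _ => h.hasDerivAt_flux t x)
    (h.decaying_pdx_flux.integrable t).integrableOn (h.decaying_flux.tendsto_atTop t),
    zero_sub] at hd

lemma integrable_mul_flux_sub (ha : ConservationLaw a b) (hg : ConservationLaw g k) (t : ℝ) :
    Integrable fun y => a t y * k t y - b t y * g t y :=
  ((ha.decaying_density.mul hg.decaying_flux).sub
    (ha.decaying_flux.mul hg.decaying_density)).integrable t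

lemma hasDerivAt_integral_integral_Ioi_mul (ha : ConservationLaw a b)
    (hg : ConservationLaw g k) (t : ℝ) :
    HasDerivAt (fun s => ∫ y, (∫ x in Ioi y, a s x) * g s y)
      (∫ y, (a t y * k t y - b t y * g t y)) t := by
  have hdecay : Decaying fun s y => -b s y * g s y + (∫ x in Ioi y, a s x) * pdx k s y :=
    (ha.decaying_flux.neg.mul hg.decaying_density).add
      (ha.decaying_density.integral_Ioi_mul hg.decaying_pdx_flux)
  have hderiv := (ha.decaying_density.integral_Ioi_mul hg.decaying_density).hasDerivAt_setIntegral
    hdecay (fun s y => (ha.hasDerivAt_integral_Ioi s y).mul (hg.hasDerivAt_density s y)) univ t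
  simp only [Measure.restrict_univ] at hderiv
  convert hderiv using 1
  -- integration by parts in `y`: `∫ (∫_{x>y} a) ∂ₓk = ∫ a k`
  refine (integral_eq_of_hasDerivAt_sub (fun y => ?_) (hdecay.integrable t)
    (ha.integrable_mul_flux_sub hg t)
    ((ha.decaying_density.integral_Ioi_mul hg.decaying_flux).integrable t)).symm
  exact ((_root_.hasDerivAt_integral_Ioi (ha.decaying_density.integrable t)
    (ha.decaying_density.continuous t) y).mul (hg.hasDerivAt_flux t y)).congr_deriv
    (by ring)

end ConservationLaw

section Densities

variable {u : ℝ → ℝ → ℂ}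

lemma hasDerivAt_Mdens_x (hu : SchwartzFamily u) (t x : ℝ) :
    HasDerivAt (Mdens u t) (pdx u t x * conj (u t x) + u t x * conj (pdx u t x)) x :=
  (hu.hasDerivAt_pdx t x).mul (hu.hasDerivAt_pdx t x).conj

lemma hasDerivAt_Pdens_x (hu : SchwartzFamily u) (t x : ℝ) :
    HasDerivAt (Pdens u t)
      (Complex.I * (conj (u t x) * pdx (pdx u) t x - u t x * conj (pdx (pdx u) t x))) x := by
  have d₀ := hu.hasDerivAt_pdx t x
  have d₁ := hu.pdx.hasDerivAt_pdx t x
  exact (((d₀.conj.mul d₁).sub (d₀.mul d₁.conj)).const_mul Complex.I).congr_deriv (by ring)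

lemma hasDerivAt_Edens_x (hu : SchwartzFamily u) (t x : ℝ) :
    HasDerivAt (Edens u t)
      (conj (pdx u t x) * pdx (pdx u) t x + pdx u t x * conj (pdx (pdx u) t x)
        - conj (u t x) * pdx (pdx (pdx u)) t x - u t x * conj (pdx (pdx (pdx u)) t x)) x := by
  have d₀ := hu.hasDerivAt_pdx t x
  have d₁ := hu.pdx.hasDerivAt_pdx t x
  have d₂ := hu.pdx.pdx.hasDerivAt_pdx t x
  exact (((d₀.conj.neg.mul d₂).add ((d₁.const_mul 2).mul d₁.conj)).sub
    (d₀.mul d₂.conj)).congr_deriv (by simp only [Pi.neg_apply]; ring)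

lemma pdx_Mdens (hu : SchwartzFamily u) :
    pdx (Mdens u) = fun t x => pdx u t x * conj (u t x) + u t x * conj (pdx u t x) :=
  funext₂ fun t x => (hasDerivAt_Mdens_x hu t x).deriv

lemma pdx_Pdens (hu : SchwartzFamily u) :
    pdx (Pdens u) = fun t x =>
      Complex.I * (conj (u t x) * pdx (pdx u) t x - u t x * conj (pdx (pdx u) t x)) :=
  funext₂ fun t x => (hasDerivAt_Pdens_x hu t x).deriv

lemma pdx_Edens (hu : SchwartzFamily u) :
    pdx (Edens u) = fun t x =>
      conj (pdx u t x) * pdx (pdx u) t x + pdx u t x * conj (pdx (pdx u) t x)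
        - conj (u t x) * pdx (pdx (pdx u)) t x - u t x * conj (pdx (pdx (pdx u)) t x) :=
  funext₂ fun t x => (hasDerivAt_Edens_x hu t x).deriv

lemma decaying_Mdens (hu : SchwartzFamily u) : Decaying (Mdens u) :=
  hu.decaying.mul hu.decaying.star

lemma decaying_Pdens (hu : SchwartzFamily u) : Decaying (Pdens u) :=
  ((hu.decaying.star.mul hu.pdx.decaying).sub (hu.decaying.mul hu.pdx.decaying.star)).const_mul _

lemma decaying_Edens (hu : SchwartzFamily u) : Decaying (Edens u) :=
  ((hu.decaying.star.neg.mul hu.pdx.pdx.decaying).add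
    ((hu.pdx.decaying.const_mul 2).mul hu.pdx.decaying.star)).sub
    (hu.decaying.mul hu.pdx.pdx.decaying.star)

lemma decaying_pdx_Mdens (hu : SchwartzFamily u) : Decaying (pdx (Mdens u)) := by
  rw [pdx_Mdens hu]
  exact (hu.pdx.decaying.mul hu.decaying.star).add (hu.decaying.mul hu.pdx.decaying.star)

end Densities

def SolvesSchrodinger (u : ℝ → ℝ → ℂ) : Prop :=
  ∀ t x : ℝ, Complex.I * pdt u t x + pdx (pdx u) t x = 0

section ConservationLaws

variable {u : ℝ → ℝ → ℂ}

lemma SolvesSchrodinger.pdt_eq (hs : SolvesSchrodinger u) (t x : ℝ) :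
    pdt u t x = Complex.I * pdx (pdx u) t x := by
  linear_combination -Complex.I * hs t x + pdt u t x * Complex.I_sq

lemma solvesSchrodinger_pdx (hu : SchwartzFamily u) (hs : SolvesSchrodinger u) :
    SolvesSchrodinger (pdx u) := by
  intro t x
  have hpdt : pdt u t = fun y => Complex.I * pdx (pdx u) t y := funext (hs.pdt_eq t)
  have h : pdx (pdt u) t x = Complex.I * pdx (pdx (pdx u)) t x := by
    change deriv (pdt u t) x = _
    rw [hpdt]
    exact ((hu.pdx.pdx.hasDerivAt_pdx t x).const_mul _).deriv
  rw [pdt_pdx (hu.contDiff.of_le (WithTop.coe_le_coe.2 le_top)), h]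
  linear_combination pdx (pdx (pdx u)) t x * Complex.I_sq

lemma conservationLaw_mass (hu : SchwartzFamily u) (hs : SolvesSchrodinger u) :
    ConservationLaw (Mdens u) (Pdens u) where
  decaying_density := decaying_Mdens hu
  decaying_flux := decaying_Pdens hu
  decaying_pdx_flux := by
    rw [pdx_Pdens hu]
    exact ((hu.decaying.star.mul hu.pdx.pdx.decaying).sub
      (hu.decaying.mul hu.pdx.pdx.decaying.star)).const_mul _
  differentiable_flux t x := (hasDerivAt_Pdens_x hu t x).differentiableAt
  hasDerivAt_density t x := by
    have d := hu.hasDerivAt_pdt t x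
    rw [pdx_Pdens hu]
    refine (d.mul d.conj).congr_deriv ?_
    simp only [hs.pdt_eq, map_mul, Complex.conj_I]
    ring

lemma conservationLaw_momentum (hu : SchwartzFamily u) (hs : SolvesSchrodinger u) :
    ConservationLaw (Pdens u) (Edens u) where
  decaying_density := decaying_Pdens hu
  decaying_flux := decaying_Edens hu
  decaying_pdx_flux := by
    rw [pdx_Edens hu]
    exact (((hu.pdx.decaying.star.mul hu.pdx.pdx.decaying).add
      (hu.pdx.decaying.mul hu.pdx.pdx.decaying.star)).sub
      (hu.decaying.star.mul hu.pdx.pdx.pdx.decaying)).sub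
      (hu.decaying.mul hu.pdx.pdx.pdx.decaying.star)
  differentiable_flux t x := (hasDerivAt_Edens_x hu t x).differentiableAt
  hasDerivAt_density t x := by
    have d₀ := hu.hasDerivAt_pdt t x
    have d₁ := hu.pdx.hasDerivAt_pdt t x
    rw [pdx_Edens hu]
    refine (((d₀.conj.mul d₁).sub (d₀.mul d₁.conj)).const_mul Complex.I).congr_deriv ?_
    simp only [hs.pdt_eq, (solvesSchrodinger_pdx hu hs).pdt_eq, map_mul, Complex.conj_I]
    linear_combination -(conj (pdx u t x) * pdx (pdx u) t x + pdx u t x * conj (pdx (pdx u) t x)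
      - conj (u t x) * pdx (pdx (pdx u)) t x - u t x * conj (pdx (pdx (pdx u)) t x))
      * Complex.I_sq

end ConservationLaws

def morawetzDensity (u v : ℝ → ℝ → ℂ) (t x : ℝ) : ℂ :=
  Mdens u t x * Edens v t x + Mdens v t x * Edens u t x - 2 * Pdens u t x * Pdens v t x

section Morawetz

variable {u v : ℝ → ℝ → ℂ}

lemma hasDerivAt_Mdens_mul_pdx_Mdens_add (hu : SchwartzFamily u) (hv : SchwartzFamily v)
    (t x : ℝ) :
    HasDerivAt (fun y => Mdens u t y * pdx (Mdens v) t y + Mdens v t y * pdx (Mdens u) t y)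
      (4 * ((pdx u t x * conj (v t x) + u t x * conj (pdx v t x))
        * conj (pdx u t x * conj (v t x) + u t x * conj (pdx v t x)))
        - morawetzDensity u v t x) x := by
  have dM (w : ℝ → ℝ → ℂ) (hw : SchwartzFamily w) :
      HasDerivAt (fun y => pdx w t y * conj (w t y) + w t y * conj (pdx w t y))
        (pdx (pdx w) t x * conj (w t x) + 2 * (pdx w t x * conj (pdx w t x))
          + w t x * conj (pdx (pdx w) t x)) x := by
    have d₀ := hw.hasDerivAt_pdx t x
    have d₁ := hw.pdx.hasDerivAt_pdx t x
    exact ((d₁.mul d₀.conj).add (d₀.mul d₁.conj)).congr_deriv (by ring)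
  rw [pdx_Mdens hu, pdx_Mdens hv]
  refine (((hasDerivAt_Mdens_x hu t x).mul (dM v hv)).add
    ((hasDerivAt_Mdens_x hv t x).mul (dM u hu))).congr_deriv ?_
  simp only [morawetzDensity, Mdens, Pdens, Edens, map_add, map_mul, Complex.conj_conj]
  linear_combination (-2 * ((conj (u t x) * pdx u t x - u t x * conj (pdx u t x))
    * (conj (v t x) * pdx v t x - v t x * conj (pdx v t x)))) * Complex.I_sq

lemma morawetzD_eq (hu : SchwartzFamily u) (hv : SchwartzFamily v) (t : ℝ) :
    morawetzD u v t = 4 * ∫ x : ℝ, (deriv (fun y => u t y * conj (v t y)) x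
      * conj (deriv (fun y => u t y * conj (v t y)) x)) := by
  have hW (x : ℝ) : deriv (fun y => u t y * conj (v t y)) x
      = pdx u t x * conj (v t x) + u t x * conj (pdx v t x) :=
    ((hu.hasDerivAt_pdx t x).mul (hv.hasDerivAt_pdx t x).conj).deriv
  have hWd : Decaying fun t x => pdx u t x * conj (v t x) + u t x * conj (pdx v t x) :=
    (hu.pdx.decaying.mul hv.decaying.star).add (hu.decaying.mul hv.pdx.decaying.star)
  simp_rw [hW, ← integral_const_mul]
  exact (integral_eq_of_hasDerivAt_sub (hasDerivAt_Mdens_mul_pdx_Mdens_add hu hv t)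
    (((hWd.mul hWd.star).const_mul 4).integrable t)
    (((((decaying_Mdens hu).mul (decaying_Edens hv)).add
      ((decaying_Mdens hv).mul (decaying_Edens hu))).sub
      (((decaying_Pdens hu).const_mul 2).mul (decaying_Pdens hv))).integrable t)
    ((((decaying_Mdens hu).mul (decaying_pdx_Mdens hv)).add
      ((decaying_Mdens hv).mul (decaying_pdx_Mdens hu))).integrable t)).symm

end Morawetz

section Interaction

variable {u v : ℝ → ℝ → ℂ}

lemma interactionI_eq (hu : SchwartzFamily u) (hv : SchwartzFamily v) (t : ℝ) :
    interactionI u v t = (∫ y, (∫ x in Ioi y, Mdens u t x) * Pdens v t y)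
      - ∫ y, (∫ x in Ioi y, Pdens u t x) * Mdens v t y := by
  rw [← integral_sub (((decaying_Mdens hu).integral_Ioi_mul (decaying_Pdens hv)).integrable t)
    (((decaying_Pdens hu).integral_Ioi_mul (decaying_Mdens hv)).integrable t)]
  refine integral_congr_ae (ae_of_all _ fun y => ?_)
  simp only
  rw [integral_sub (((decaying_Mdens hu).integrable t).integrableOn.mul_const _)
    (((decaying_Pdens hu).integrable t).integrableOn.mul_const _),
    integral_mul_const, integral_mul_const]

lemma hasDerivAt_interactionI (hu : SchwartzFamily u) (hv : SchwartzFamily v)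
    (hsu : SolvesSchrodinger u) (hsv : SolvesSchrodinger v) (t : ℝ) :
    HasDerivAt (interactionI u v) (morawetzD u v t) t := by
  have hMu := conservationLaw_mass hu hsu
  have hPu := conservationLaw_momentum hu hsu
  have hMv := conservationLaw_mass hv hsv
  have hPv := conservationLaw_momentum hv hsv
  rw [funext (interactionI_eq hu hv)]
  refine ((hMu.hasDerivAt_integral_integral_Ioi_mul hPv t).sub
    (hPu.hasDerivAt_integral_integral_Ioi_mul hMv t)).congr_deriv ?_
  rw [← integral_sub (hMu.integrable_mul_flux_sub hPv t) (hPu.integrable_mul_flux_sub hMv t)]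
  exact integral_congr_ae (ae_of_all _ fun y => by ring)

end Interaction

end Schrodinger

/-- Monotonicity of the interaction Morawetz functional: for smooth
Schwartz-class (uniformly on compact time intervals) solutions `u`, `v` of the linear
Schrödinger equation, `I` is differentiable with
`dI/dt = ∫ (M(u)E(v) + M(v)E(u) − 2P(u)P(v)) = 4∫ |∂ₓ(u·conj v)|² ≥ 0`;
in particular `I` is nondecreasing. -/
theorem interaction_morawetz_monotone (u v : ℝ → ℝ → ℂ)
    (hu : ContDiff ℝ (⊤ : ℕ∞) fun p : ℝ × ℝ => u p.1 p.2)
    (hv : ContDiff ℝ (⊤ : ℕ∞) fun p : ℝ × ℝ => v p.1 p.2)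
    (hueq : ∀ t x : ℝ, Complex.I * pdt u t x + pdx (pdx u) t x = 0)
    (hveq : ∀ t x : ℝ, Complex.I * pdt v t x + pdx (pdx v) t x = 0)
    (huS : ∀ (k n : ℕ) (T : ℝ), ∃ C : ℝ, ∀ t x : ℝ, |t| ≤ T →
      |x| ^ k * ‖iteratedDeriv n (fun y => u t y) x‖ ≤ C)
    (hvS : ∀ (k n : ℕ) (T : ℝ), ∃ C : ℝ, ∀ t x : ℝ, |t| ≤ T →
      |x| ^ k * ‖iteratedDeriv n (fun y => v t y) x‖ ≤ C) :
    (∀ t : ℝ, HasDerivAt (interactionI u v) (morawetzD u v t) t) ∧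
    (∀ t : ℝ, morawetzD u v t
      = 4 * ∫ x : ℝ, (deriv (fun y => u t y * conj (v t y)) x
          * conj (deriv (fun y => u t y * conj (v t y)) x))) ∧
    (∀ t : ℝ, 0 ≤ (morawetzD u v t).re) ∧
    Monotone (fun t => (interactionI u v t).re) := by
  have hU : Schrodinger.SchwartzFamily u := ⟨hu, huS⟩
  have hV : Schrodinger.SchwartzFamily v := ⟨hv, hvS⟩
  have hderiv := Schrodinger.hasDerivAt_interactionI hU hV hueq hveq
  have hnonneg (t : ℝ) : 0 ≤ (morawetzD u v t).re := by
    rw [Schrodinger.morawetzD_eq hU hV, ← RCLike.re_to_complex, RCLike.ofNat_mul_re]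
    exact mul_nonneg zero_le_four (re_integral_mul_conj_nonneg volume _)
  exact ⟨hderiv, Schrodinger.morawetzD_eq hU hV, hnonneg,
    monotone_re_of_hasDerivAt hderiv hnonneg⟩
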